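/- Let k : (0,∞) → [0,∞) be nonincreasing and lower semicontinuous, let 1 < p < ∞, and let σ be a locally finite positive Borel measure on ℝ^n satisfying a doubling condition. Set K(Q) = k(r_Q) for Q ∈ 𝒟. Then there exist constants c, C > 0 such that for every locally finite positive Borel measure μ on ℝ^n and every x ∈ ℝ^n, ∑_{Q∈𝒟} k(c r_Q) σ(Q) χ_Q(x) (∫_Q K̄(Q)(y) dμ(y))^{p'−1} ≤ C 𝒲_{k,σ}[μ](x). -/

import Mathlib

open MeasureTheory ENNReal Set
open scoped Classical ENNReal NNReal

noncomputable section

/-- We model `ℝ^n` as `EuclideanSpace ℝ (Fin n)`. -/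
abbrev Euc (n : ℕ) := EuclideanSpace ℝ (Fin n)

/-- Indices `(k, m)` of dyadic cubes in `ℝ^n`. -/
abbrev DIdx (n : ℕ) := ℤ × (Fin n → ℤ)

/-- The dyadic cube with index `q = (k, m)`, namely `2^{-k}(m + [0,1)^n)`. -/
def dCube (n : ℕ) (q : DIdx n) : Set (Euc n) :=
  {x | ∀ i, (q.2 i : ℝ) ≤ (2:ℝ) ^ q.1 * x i ∧ (2:ℝ) ^ q.1 * x i < (q.2 i : ℝ) + 1}

/-- The side length of the dyadic cube of index `q = (k, m)` is `2^{-k}`. -/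
def sideLen (n : ℕ) (q : DIdx n) : ℝ := (2:ℝ) ^ (-q.1)

/-- Characteristic function of a dyadic cube, with values in `ℝ≥0∞`. -/
def ch (n : ℕ) (q : DIdx n) (x : Euc n) : ℝ≥0∞ := (dCube n q).indicator 1 x

/-- `K̄(Q)(x) = σ(Q)⁻¹ ∑_{Q' ⊆ Q} K(Q') σ(Q') χ_{Q'}(x)`.
(Since `σ(Q') ≤ σ(Q)` for `Q' ⊆ Q`, this is automatically `0` when `σ(Q) = 0`,
by the convention `∞ · 0 = 0` in `ℝ≥0∞`.) -/
def Kbar (n : ℕ) (σ : Measure (Euc n)) (K : DIdx n → ℝ≥0∞) (q : DIdx n) (x : Euc n) : ℝ≥0∞ :=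
  (σ (dCube n q))⁻¹ *
    ∑' q' : DIdx n, if dCube n q' ⊆ dCube n q then K q' * σ (dCube n q') * ch n q' x else 0

/-- `k̄(r)(x) = (1/σ(B(x,r))) ∫_0^r k(s) σ(B(x,s)) ds/s`. -/
def kbar (n : ℕ) (σ : Measure (Euc n)) (k : ℝ → ℝ) (r : ℝ) (x : Euc n) : ℝ≥0∞ :=
  (σ (Metric.ball x r))⁻¹ *
    ∫⁻ s in Ioo (0:ℝ) r, ENNReal.ofReal (k s / s) * σ (Metric.ball x s)

/-- `σ` is a doubling measure: `σ(B(x,2r)) ≤ C₀ σ(B(x,r))` for all `x`, `r > 0`. -/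
def Doubling (n : ℕ) (σ : Measure (Euc n)) : Prop :=
  ∃ C₀ : ℝ, 0 < C₀ ∧ ∀ (x : Euc n) (r : ℝ), 0 < r →
    σ (Metric.ball x (2 * r)) ≤ ENNReal.ofReal C₀ * σ (Metric.ball x r)

/-- The pair `(k,σ)` satisfies the logarithmic bounded oscillation (LBO) condition:
`sup_{y ∈ B(x,r)} k̄(r)(y) ≤ A inf_{y ∈ B(x,r)} k̄(r)(y)` uniformly in `x`, `r`. -/
def LBO (n : ℕ) (σ : Measure (Euc n)) (k : ℝ → ℝ) : Prop :=
  ∃ A : ℝ, 0 < A ∧ ∀ (x : Euc n) (r : ℝ), 0 < r →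
    ∀ y ∈ Metric.ball x r, ∀ z ∈ Metric.ball x r,
      kbar n σ k r y ≤ ENNReal.ofReal A * kbar n σ k r z

/-- The continuous Wolff potential
`𝒲_{k,σ}[μ](x) = ∫_0^∞ k(r) σ(B(x,r)) (∫_{B(x,r)} k̄(r)(y) dμ(y))^{p'-1} dr/r`. -/
def WolffC (n : ℕ) (σ : Measure (Euc n)) (k : ℝ → ℝ) (p : ℝ) (μ : Measure (Euc n))
    (x : Euc n) : ℝ≥0∞ :=
  ∫⁻ r in Ioi (0:ℝ), ENNReal.ofReal (k r / r) * σ (Metric.ball x r) *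
    (∫⁻ y in Metric.ball x r, kbar n σ k r y ∂μ) ^ (p / (p - 1) - 1)

/-!
Fix `x`; only the cubes `Q ∋ x`, one per scale, contribute. For `y ∈ Q` and
`r ∈ (2n r_Q, 4n r_Q]` the dyadic kernel `K̄(Q)(y)` is at most a constant times `k̄(r)(y)`:
each subcube `Q' ∋ y` of side `ρ` has `σ(Q') ≲ σ(B(y, ρ/2))` by doubling, and since `k` is
nonincreasing, `k(ρ) σ(B(y, ρ/2)) ≤ 2 ∫_{ρ/2}^{ρ} k(s) σ(B(y, s)) ds/s`; these shells are
disjoint and lie in `(0, r)`, while `σ(B(y, r)) ≲ σ(Q)`. The same monotonicity bounds the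
term of `Q` by the Wolff integral over the shell `(2n r_Q, 4n r_Q]`, and these shells are
disjoint as `Q` runs through the scales.
-/

open Metric Function

section DyadicGeometry

variable {n : ℕ}

lemma sideLen_pos (q : DIdx n) : 0 < sideLen n q := zpow_pos two_pos _

lemma mem_dCube_iff {q : DIdx n} {x : Euc n} :
    x ∈ dCube n q ↔ ∀ i, sideLen n q * q.2 i ≤ x i ∧ x i < sideLen n q * (q.2 i + 1) := by
  have h2 : (0:ℝ) < 2 ^ q.1 := zpow_pos two_pos _
  simp only [sideLen, zpow_neg, inv_mul_le_iff₀ h2, lt_inv_mul_iff₀ h2]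
  rfl

lemma measurableSet_dCube (q : DIdx n) : MeasurableSet (dCube n q) := by
  simp only [dCube, Set.ofPred_forall, Set.ofPred_and]
  exact .iInter fun i =>
    (measurableSet_le measurable_const (by fun_prop)).inter
      (measurableSet_lt (by fun_prop) measurable_const)

def cubeAt (n : ℕ) (j : ℤ) (x : Euc n) : DIdx n := (j, fun i => ⌊(2:ℝ) ^ j * x i⌋)

lemma mem_cubeAt (j : ℤ) (x : Euc n) : x ∈ dCube n (cubeAt n j x) :=
  fun _ => ⟨Int.floor_le _, Int.lt_floor_add_one _⟩

lemma eq_cubeAt_of_mem {q : DIdx n} {x : Euc n} (h : x ∈ dCube n q) : cubeAt n q.1 x = q :=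
  Prod.ext rfl <| funext fun i => Int.floor_eq_iff.2 (h i)

lemma tsum_eq_tsum_cubeAt {f : DIdx n → ℝ≥0∞} {x : Euc n}
    (hf : ∀ q, x ∉ dCube n q → f q = 0) : ∑' q, f q = ∑' j, f (cubeAt n j x) := by
  refine (Injective.tsum_eq (fun _ _ h => congrArg Prod.fst h) ?_).symm
  intro q hq
  by_contra hx
  exact hq (hf q fun hmem => hx ⟨q.1, eq_cubeAt_of_mem hmem⟩)

lemma abs_sub_lt_sideLen {q : DIdx n} {y w : Euc n} (hy : y ∈ dCube n q) (hw : w ∈ dCube n q)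
    (i : Fin n) : |y i - w i| < sideLen n q := by
  rw [mem_dCube_iff] at hy hw
  rw [abs_sub_lt_iff]
  constructor <;> linarith [hy i, hw i]

lemma dist_lt_of_forall_abs_sub_lt (hn : 0 < n) {x y : Euc n} {ε : ℝ}
    (h : ∀ i, |x i - y i| < ε) : dist x y < n * ε := by
  have hε : 0 < ε := (abs_nonneg _).trans_lt (h ⟨0, hn⟩)
  have hn1 : (1:ℝ) ≤ n := by exact_mod_cast hn
  have hsum : ∑ i, dist (x i) (y i) ^ 2 < ∑ _i : Fin n, ε ^ 2 :=
    Finset.sum_lt_sum_of_nonempty ⟨⟨0, hn⟩, Finset.mem_univ _⟩ fun i _ => by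
      rw [Real.dist_eq]
      exact pow_lt_pow_left₀ (h i) (abs_nonneg _) two_ne_zero
  rw [EuclideanSpace.dist_eq, Real.sqrt_lt' (by positivity)]
  simp only [Finset.sum_const, Finset.card_univ, Fintype.card_fin, nsmul_eq_mul] at hsum
  nlinarith

lemma dist_lt_of_mem_dCube (hn : 0 < n) {q : DIdx n} {y w : Euc n} (hy : y ∈ dCube n q)
    (hw : w ∈ dCube n q) : dist y w < n * sideLen n q :=
  dist_lt_of_forall_abs_sub_lt hn (abs_sub_lt_sideLen hy hw)

lemma dCube_subset_ball (hn : 0 < n) {q : DIdx n} {x : Euc n} (hx : x ∈ dCube n q) {r : ℝ}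
    (hr : n * sideLen n q ≤ r) : dCube n q ⊆ ball x r :=
  fun _ hw => mem_ball.2 ((dist_lt_of_mem_dCube hn hw hx).trans_le hr)

def dCubePoint (n : ℕ) (q : DIdx n) (s : ℝ) : Euc n :=
  WithLp.toLp 2 fun i => sideLen n q * (q.2 i + s)

lemma dCubePoint_mem (q : DIdx n) {s : ℝ} (hs0 : 0 ≤ s) (hs1 : s < 1) :
    dCubePoint n q s ∈ dCube n q := by
  have hs := sideLen_pos q
  refine mem_dCube_iff.2 fun i => ⟨?_, ?_⟩ <;> simp only [dCubePoint] <;> nlinarith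

lemma ball_dCubePoint_half_subset (q : DIdx n) :
    ball (dCubePoint n q (1/2)) (sideLen n q / 2) ⊆ dCube n q := by
  intro w hw
  refine mem_dCube_iff.2 fun i => ?_
  have hi := (PiLp.dist_apply_le w (dCubePoint n q (1/2)) i).trans_lt hw
  rw [Real.dist_eq, abs_sub_lt_iff] at hi
  simp only [dCubePoint] at hi
  constructor <;> linarith [hi.1, hi.2]

lemma le_of_dCube_subset (hn : 0 < n) {q q' : DIdx n} (h : dCube n q' ⊆ dCube n q) :
    q.1 ≤ q'.1 := by
  -- the centre and a corner of `Q'` are `r_{Q'}/2` apart in each coordinate, and both lie in `Q`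
  have hlt := abs_sub_lt_sideLen (h (dCubePoint_mem q' one_half_pos.le one_half_lt_one))
    (h (dCubePoint_mem q' le_rfl one_pos)) ⟨0, hn⟩
  have hhalf : sideLen n q' / 2 = 2 ^ (-q'.1 - 1) := by
    rw [sideLen, zpow_sub₀ two_ne_zero, zpow_one]
  simp only [dCubePoint] at hlt
  rw [show sideLen n q' * (q'.2 ⟨0, hn⟩ + 1/2) - sideLen n q' * (q'.2 ⟨0, hn⟩ + 0)
    = sideLen n q' / 2 by ring, abs_of_pos (by linarith [sideLen_pos q']), hhalf, sideLen,
    zpow_lt_zpow_iff_right₀ (by norm_num : (1:ℝ) < 2)] at hlt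
  omega

end DyadicGeometry

def DoublingWith {n : ℕ} (σ : Measure (Euc n)) (D : ℝ≥0) : Prop :=
  ∀ (x : Euc n) (r : ℝ), 0 < r → σ (ball x (2 * r)) ≤ D * σ (ball x r)

section Doubling

variable {n : ℕ} {σ : Measure (Euc n)} {D : ℝ≥0}

lemma Doubling.exists_doublingWith (h : Doubling n σ) : ∃ D : ℝ≥0, D ≠ 0 ∧ DoublingWith σ D := by
  obtain ⟨D, hD, hC⟩ := h
  exact ⟨D.toNNReal, by simpa using hD, hC⟩

lemma measure_ball_two_pow_mul_le (hD : DoublingWith σ D) (x : Euc n) {ρ : ℝ} (hρ : 0 < ρ) (e : ℕ) :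
    σ (ball x (2 ^ e * ρ)) ≤ D ^ e * σ (ball x ρ) := by
  induction e with
  | zero => simp
  | succ e ih =>
    calc σ (ball x (2 ^ (e + 1) * ρ)) = σ (ball x (2 * (2 ^ e * ρ))) := by ring_nf
      _ ≤ D * σ (ball x (2 ^ e * ρ)) := hD _ _ (by positivity)
      _ ≤ D * (D ^ e * σ (ball x ρ)) := by gcongr
      _ = D ^ (e + 1) * σ (ball x ρ) := by ring

lemma measure_dCube_le_measure_ball (hn : 0 < n) (hD : DoublingWith σ D)
    {q : DIdx n} {y : Euc n} (hy : y ∈ dCube n q) :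
    σ (dCube n q) ≤ D ^ (n + 1) * σ (ball y (sideLen n q / 2)) := by
  have hs := sideLen_pos q
  have hn2 : (n:ℝ) ≤ 2 ^ n := by exact_mod_cast Nat.lt_two_pow_self.le
  refine (measure_mono (dCube_subset_ball hn hy ?_)).trans
    (measure_ball_two_pow_mul_le hD y (half_pos hs) (n + 1))
  rw [pow_succ]
  nlinarith

lemma measure_ball_le_measure_dCube (hn : 0 < n) (hD : DoublingWith σ D)
    {q : DIdx n} {y : Euc n} (hy : y ∈ dCube n q) {r : ℝ} (hr : r ≤ 4 * n * sideLen n q) :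
    σ (ball y r) ≤ D ^ (n + 4) * σ (dCube n q) := by
  have hs := sideLen_pos q
  have hn2 : (n:ℝ) ≤ 2 ^ n := by exact_mod_cast Nat.lt_two_pow_self.le
  set c := dCubePoint n q (1/2)
  have hc : dist y c < n * sideLen n q :=
    dist_lt_of_mem_dCube hn hy (dCubePoint_mem q one_half_pos.le one_half_lt_one)
  calc σ (ball y r) ≤ σ (ball c (2 ^ (n + 4) * (sideLen n q / 2))) := by
        refine measure_mono (ball_subset_ball' ?_)
        rw [pow_add]
        nlinarith
    _ ≤ D ^ (n + 4) * σ (ball c (sideLen n q / 2)) :=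
        measure_ball_two_pow_mul_le hD c (half_pos hs) _
    _ ≤ D ^ (n + 4) * σ (dCube n q) := by gcongr; exact ball_dCubePoint_half_subset q

end Doubling

lemma ofReal_mul_le_two_mul_setLIntegral_Ioc {k : ℝ → ℝ} (hk0 : ∀ r ∈ Ioi (0:ℝ), 0 ≤ k r)
    (hmono : AntitoneOn k (Ioi (0:ℝ))) {G : ℝ → ℝ≥0∞} {c : ℝ≥0∞} {ρ : ℝ} (hρ : 0 < ρ)
    (hG : ∀ r ∈ Ioc (ρ / 2) ρ, c ≤ G r) :
    ENNReal.ofReal (k ρ) * c ≤ 2 * ∫⁻ r in Ioc (ρ / 2) ρ, ENNReal.ofReal (k r / r) * G r := by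
  have hpt : ∀ r ∈ Ioc (ρ / 2) ρ, ENNReal.ofReal (k ρ / ρ) * c ≤ ENNReal.ofReal (k r / r) * G r :=
    fun r hr => by
      have hr0 : 0 < r := (half_pos hρ).trans hr.1
      gcongr ?_ * ?_
      · exact ENNReal.ofReal_le_ofReal <|
          div_le_div₀ (hk0 r hr0) (hmono hr0 hρ hr.2) hr0 hr.2
      · exact hG r hr
  calc ENNReal.ofReal (k ρ) * c
      = 2 * (ENNReal.ofReal (k ρ / ρ) * c * ENNReal.ofReal (ρ - ρ / 2)) := by
        rw [mul_right_comm, ← ENNReal.ofReal_mul (div_nonneg (hk0 ρ hρ) hρ.le), ← mul_assoc,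
          ← ENNReal.ofReal_ofNat 2, ← ENNReal.ofReal_mul zero_le_two]
        congr 2
        field_simp
        ring
    _ = 2 * ∫⁻ _ in Ioc (ρ / 2) ρ, ENNReal.ofReal (k ρ / ρ) * c := by
        rw [setLIntegral_const, Real.volume_Ioc]
    _ ≤ 2 * ∫⁻ r in Ioc (ρ / 2) ρ, ENNReal.ofReal (k r / r) * G r := by
        gcongr 2 * ?_
        exact setLIntegral_mono' measurableSet_Ioc hpt

lemma pairwise_disjoint_Ioc_half_mul_two_zpow (b : ℝ) :
    Pairwise (Disjoint on fun j : ℤ => Ioc (b * 2 ^ (-j) / 2) (b * 2 ^ (-j))) := by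
  intro i i' hne
  wlog hlt : i < i' generalizing i i'
  · exact (this hne.symm (lt_of_le_of_ne (not_lt.1 hlt) hne.symm)).symm
  have hle : (2:ℝ) ^ (-i') ≤ 2 ^ (-i) / 2 := by
    rw [div_eq_mul_inv, ← zpow_sub_one₀ two_ne_zero]
    exact zpow_le_zpow_right₀ one_le_two (by omega)
  have hpos : (0:ℝ) < 2 ^ (-i') := zpow_pos two_pos _
  refine Set.disjoint_left.2 fun s hs hs' => ?_
  have hb : 0 < b := by nlinarith [hs'.1, hs'.2]
  nlinarith [hs.1, hs'.2]

lemma tsum_setLIntegral_le_of_subset {α ι : Type*} [MeasurableSpace α] [Countable ι]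
    {μ : Measure α} {f : α → ℝ≥0∞} {s : ι → Set α} {t : Set α}
    (hs : ∀ i, MeasurableSet (s i)) (hd : Pairwise (Disjoint on s)) (hst : ∀ i, s i ⊆ t) :
    ∑' i, ∫⁻ x in s i, f x ∂μ ≤ ∫⁻ x in t, f x ∂μ := by
  rw [← lintegral_iUnion hs hd]
  exact lintegral_mono_set (iUnion_subset hst)

section Comparison

variable {n : ℕ} {σ : Measure (Euc n)} {D : ℝ≥0} {k : ℝ → ℝ}

lemma ofReal_mul_measure_dCube_le (hn : 0 < n) (hD : DoublingWith σ D)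
    (hk0 : ∀ r ∈ Ioi (0:ℝ), 0 ≤ k r) (hmono : AntitoneOn k (Ioi (0:ℝ)))
    {q : DIdx n} {y : Euc n} (hy : y ∈ dCube n q) :
    ENNReal.ofReal (k (sideLen n q)) * σ (dCube n q) ≤
      2 * D ^ (n + 1) * ∫⁻ s in Ioc (sideLen n q / 2) (sideLen n q),
        ENNReal.ofReal (k s / s) * σ (ball y s) := by
  calc ENNReal.ofReal (k (sideLen n q)) * σ (dCube n q)
      ≤ ENNReal.ofReal (k (sideLen n q)) * (D ^ (n + 1) * σ (ball y (sideLen n q / 2))) := by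
        gcongr
        exact measure_dCube_le_measure_ball hn hD hy
    _ = D ^ (n + 1) * (ENNReal.ofReal (k (sideLen n q)) * σ (ball y (sideLen n q / 2))) := by
        ring
    _ ≤ D ^ (n + 1) * (2 * ∫⁻ s in Ioc (sideLen n q / 2) (sideLen n q),
          ENNReal.ofReal (k s / s) * σ (ball y s)) := by
        gcongr D ^ (n + 1) * ?_
        exact ofReal_mul_le_two_mul_setLIntegral_Ioc hk0 hmono (sideLen_pos q)
          fun s hs => measure_mono (ball_subset_ball hs.1.le)
    _ = _ := by ring

lemma tsum_subcube_le_lintegral (hn : 0 < n) (hD : DoublingWith σ D)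
    (hk0 : ∀ r ∈ Ioi (0:ℝ), 0 ≤ k r) (hmono : AntitoneOn k (Ioi (0:ℝ)))
    (q : DIdx n) (y : Euc n) {r : ℝ} (hr : sideLen n q < r) :
    ∑' q', (if dCube n q' ⊆ dCube n q then
        ENNReal.ofReal (k (sideLen n q')) * σ (dCube n q') * ch n q' y else 0) ≤
      2 * D ^ (n + 1) * ∫⁻ s in Ioo 0 r, ENNReal.ofReal (k s / s) * σ (ball y s) := by
  set J : ℤ → Set ℝ := fun i => Ioc (2 ^ (-i) / 2) (2 ^ (-i)) ∩ Ioo 0 r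
  have hterm : ∀ i, (if dCube n (cubeAt n i y) ⊆ dCube n q then
      ENNReal.ofReal (k (sideLen n (cubeAt n i y))) * σ (dCube n (cubeAt n i y)) *
        ch n (cubeAt n i y) y else 0) ≤
      2 * D ^ (n + 1) * ∫⁻ s in J i, ENNReal.ofReal (k s / s) * σ (ball y s) := by
    intro i
    split_ifs with hsub
    · have hi : (2:ℝ) ^ (-i) ≤ sideLen n q :=
        zpow_le_zpow_right₀ one_le_two (neg_le_neg (le_of_dCube_subset hn hsub))
      have hJ : J i = Ioc (2 ^ (-i) / 2) (2 ^ (-i)) := inter_eq_left.2 fun s hs =>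
        ⟨(half_pos (sideLen_pos (cubeAt n i y))).trans hs.1, hs.2.trans_lt (hi.trans_lt hr)⟩
      rw [hJ, ch, indicator_of_mem (mem_cubeAt i y), Pi.one_apply, mul_one]
      exact ofReal_mul_measure_dCube_le hn hD hk0 hmono (mem_cubeAt i y)
    · exact zero_le
  have hdisj : Pairwise (Disjoint on fun i : ℤ => Ioc ((2:ℝ) ^ (-i) / 2) (2 ^ (-i))) := by
    simpa only [one_mul] using pairwise_disjoint_Ioc_half_mul_two_zpow 1
  have hJd : Pairwise (Disjoint on J) :=
    hdisj.mono fun _ _ h => h.mono inter_subset_left inter_subset_left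
  rw [tsum_eq_tsum_cubeAt (x := y) fun q' hq' => by simp [ch, hq']]
  calc _ ≤ ∑' i, 2 * D ^ (n + 1) * ∫⁻ s in J i, ENNReal.ofReal (k s / s) * σ (ball y s) :=
        ENNReal.tsum_le_tsum hterm
    _ = 2 * D ^ (n + 1) * ∑' i, ∫⁻ s in J i, ENNReal.ofReal (k s / s) * σ (ball y s) :=
        ENNReal.tsum_mul_left
    _ ≤ _ := by
        gcongr 2 * D ^ (n + 1) * ?_
        exact tsum_setLIntegral_le_of_subset (fun _ => measurableSet_Ioc.inter measurableSet_Ioo)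
          hJd fun _ => inter_subset_right

lemma Kbar_le_mul_kbar (hn : 0 < n) (hD : DoublingWith σ D) (hD0 : D ≠ 0)
    (hk0 : ∀ r ∈ Ioi (0:ℝ), 0 ≤ k r) (hmono : AntitoneOn k (Ioi (0:ℝ)))
    {q : DIdx n} {y : Euc n} (hy : y ∈ dCube n q) {r : ℝ} (hr : sideLen n q < r)
    (hr' : r ≤ 4 * n * sideLen n q) :
    Kbar n σ (fun q => ENNReal.ofReal (k (sideLen n q))) q y ≤
      2 * D ^ (2 * n + 5) * kbar n σ k r y := by
  have hE0 : (D : ℝ≥0∞) ^ (n + 4) ≠ 0 := pow_ne_zero _ (by exact_mod_cast hD0)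
  have hEt : (D : ℝ≥0∞) ^ (n + 4) ≠ ⊤ := ENNReal.pow_ne_top ENNReal.coe_ne_top
  have hinv : (σ (dCube n q))⁻¹ ≤ D ^ (n + 4) * (σ (ball y r))⁻¹ :=
    calc (σ (dCube n q))⁻¹ = D ^ (n + 4) * (D ^ (n + 4) * σ (dCube n q))⁻¹ := by
          rw [ENNReal.mul_inv (Or.inl hE0) (Or.inl hEt), ENNReal.mul_inv_cancel_left hE0 hEt]
      _ ≤ D ^ (n + 4) * (σ (ball y r))⁻¹ := by
          gcongr
          exact measure_ball_le_measure_dCube hn hD hy hr'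
  calc Kbar n σ _ q y
      ≤ (D ^ (n + 4) * (σ (ball y r))⁻¹) * (2 * D ^ (n + 1) *
          ∫⁻ s in Ioo 0 r, ENNReal.ofReal (k s / s) * σ (ball y s)) :=
        mul_le_mul' hinv (tsum_subcube_le_lintegral hn hD hk0 hmono q y hr)
    _ = _ := by rw [kbar]; ring

lemma inv_mul_setLIntegral_Kbar_le (hn : 0 < n) (hD : DoublingWith σ D) (hD0 : D ≠ 0)
    (hk0 : ∀ r ∈ Ioi (0:ℝ), 0 ≤ k r) (hmono : AntitoneOn k (Ioi (0:ℝ)))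
    (μ : Measure (Euc n)) {q : DIdx n} {x : Euc n} (hx : x ∈ dCube n q) {r : ℝ}
    (hr : 2 * n * sideLen n q < r) (hr' : r ≤ 4 * n * sideLen n q) :
    (2 * (D : ℝ≥0∞) ^ (2 * n + 5))⁻¹ *
        ∫⁻ y in dCube n q, Kbar n σ (fun q => ENNReal.ofReal (k (sideLen n q))) q y ∂μ ≤
      ∫⁻ y in ball x r, kbar n σ k r y ∂μ := by
  have hB0 : (2 * D ^ (2 * n + 5) : ℝ≥0∞) ≠ 0 :=
    mul_ne_zero two_ne_zero (pow_ne_zero _ (by exact_mod_cast hD0))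
  have hBt : (2 * D ^ (2 * n + 5) : ℝ≥0∞) ≠ ⊤ :=
    ENNReal.mul_ne_top ENNReal.ofNat_ne_top (ENNReal.pow_ne_top ENNReal.coe_ne_top)
  have hs := sideLen_pos q
  have hn1 : (1:ℝ) ≤ n := by exact_mod_cast hn
  have hQr : dCube n q ⊆ ball x r := dCube_subset_ball hn hx (by nlinarith)
  rw [← lintegral_const_mul' _ _ (ENNReal.inv_ne_top.2 hB0)]
  calc _ ≤ ∫⁻ y in dCube n q, kbar n σ k r y ∂μ :=
        setLIntegral_mono' (measurableSet_dCube q) fun y hy =>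
          (ENNReal.inv_mul_le_iff hB0 hBt).2
            (Kbar_le_mul_kbar hn hD hD0 hk0 hmono hy (by nlinarith) hr')
    _ ≤ _ := lintegral_mono_set hQr

lemma dyadic_term_le_two_mul_setLIntegral (hn : 0 < n) (hD : DoublingWith σ D) (hD0 : D ≠ 0)
    (hk0 : ∀ r ∈ Ioi (0:ℝ), 0 ≤ k r) (hmono : AntitoneOn k (Ioi (0:ℝ)))
    {δ : ℝ} (hδ : 0 ≤ δ) (μ : Measure (Euc n)) {q : DIdx n} {x : Euc n}
    (hx : x ∈ dCube n q) :
    ENNReal.ofReal (k (4 * n * sideLen n q)) * σ (dCube n q) *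
        (∫⁻ y in dCube n q, Kbar n σ (fun q => ENNReal.ofReal (k (sideLen n q))) q y ∂μ) ^ δ ≤
      2 * (2 * (D : ℝ≥0∞) ^ (2 * n + 5)) ^ δ *
        ∫⁻ r in Ioc (4 * n * sideLen n q / 2) (4 * n * sideLen n q),
          ENNReal.ofReal (k r / r) * σ (ball x r) *
            (∫⁻ y in ball x r, kbar n σ k r y ∂μ) ^ δ := by
  set B : ℝ≥0∞ := 2 * D ^ (2 * n + 5)
  set M := ∫⁻ y in dCube n q, Kbar n σ (fun q => ENNReal.ofReal (k (sideLen n q))) q y ∂μ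
  set a := ENNReal.ofReal (k (4 * n * sideLen n q))
  set G : ℝ → ℝ≥0∞ := fun r => σ (ball x r) * (∫⁻ y in ball x r, kbar n σ k r y ∂μ) ^ δ
  have hB0 : B ≠ 0 := mul_ne_zero two_ne_zero (pow_ne_zero _ (by exact_mod_cast hD0))
  have hBt : B ≠ ⊤ := ENNReal.mul_ne_top ENNReal.ofNat_ne_top
    (ENNReal.pow_ne_top ENNReal.coe_ne_top)
  have hcancel : B ^ δ * (B ^ δ)⁻¹ = 1 :=
    ENNReal.mul_inv_cancel (ENNReal.rpow_pos (pos_iff_ne_zero.2 hB0) hBt).ne'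
      (ENNReal.rpow_ne_top_of_nonneg hδ hBt)
  have hs := sideLen_pos q
  have hn1 : (1:ℝ) ≤ n := by exact_mod_cast hn
  have hG : ∀ r ∈ Ioc (4 * n * sideLen n q / 2) (4 * n * sideLen n q),
      σ (dCube n q) * (B⁻¹ * M) ^ δ ≤ G r := fun r hr => by
    have hQr : dCube n q ⊆ ball x r := dCube_subset_ball hn hx (by nlinarith [hr.1])
    simp only [G]
    gcongr
    exact inv_mul_setLIntegral_Kbar_le hn hD hD0 hk0 hmono μ hx (by linarith [hr.1]) hr.2
  calc a * σ (dCube n q) * M ^ δ = (B ^ δ * (B ^ δ)⁻¹) * (a * σ (dCube n q) * M ^ δ) := by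
        rw [hcancel, one_mul]
    _ = B ^ δ * (a * (σ (dCube n q) * (B⁻¹ * M) ^ δ)) := by
        rw [ENNReal.mul_rpow_of_nonneg B⁻¹ M hδ, ENNReal.inv_rpow]; ring
    _ ≤ B ^ δ * (2 * ∫⁻ r in Ioc (4 * n * sideLen n q / 2) (4 * n * sideLen n q),
          ENNReal.ofReal (k r / r) * G r) := by
        gcongr B ^ δ * ?_
        exact ofReal_mul_le_two_mul_setLIntegral_Ioc hk0 hmono (by positivity) hG
    _ = _ := by simp_rw [G, ← mul_assoc]; ring

end Comparison

theorem stmt16_general (n : ℕ) (hn : 0 < n) (k : ℝ → ℝ)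
    (hk0 : ∀ r ∈ Ioi (0:ℝ), 0 ≤ k r) (hmono : AntitoneOn k (Ioi (0:ℝ)))
    (p : ℝ) (hp : 1 < p)
    (σ : Measure (Euc n)) (hσ : Doubling n σ) :
    ∃ c C : ℝ, 0 < c ∧ 0 < C ∧
      ∀ (μ : Measure (Euc n)), IsLocallyFiniteMeasure μ → ∀ x : Euc n,
        (∑' Q : DIdx n, ENNReal.ofReal (k (c * sideLen n Q)) * σ (dCube n Q) * ch n Q x *
            (∫⁻ y in dCube n Q,
                Kbar n σ (fun q => ENNReal.ofReal (k (sideLen n q))) Q y ∂μ) ^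
              (p / (p - 1) - 1)) ≤
          ENNReal.ofReal C * WolffC n σ k p μ x := by
  obtain ⟨D, hD0, hD⟩ := hσ.exists_doublingWith
  set δ := p / (p - 1) - 1 with hδ_def
  have hδ : 0 < δ := by rw [hδ_def, sub_pos, one_lt_div (by linarith)]; linarith
  refine ⟨4 * n, 2 * (2 * (D : ℝ) ^ (2 * n + 5)) ^ δ, mul_pos four_pos (Nat.cast_pos.2 hn),
    by positivity, fun μ _ x => ?_⟩
  have hC : ENNReal.ofReal (2 * (2 * (D : ℝ) ^ (2 * n + 5)) ^ δ) =
      2 * (2 * (D : ℝ≥0∞) ^ (2 * n + 5)) ^ δ := by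
    rw [ENNReal.ofReal_mul zero_le_two, ← ENNReal.ofReal_rpow_of_nonneg (by positivity) hδ.le,
      ENNReal.ofReal_mul zero_le_two, ENNReal.ofReal_pow D.coe_nonneg]
    simp
  rw [hC, WolffC, tsum_eq_tsum_cubeAt (x := x) fun q hq => by simp [ch, hq]]
  set B := 2 * (2 * (D : ℝ≥0∞) ^ (2 * n + 5)) ^ δ
  set F : ℝ → ℝ≥0∞ := fun r =>
    ENNReal.ofReal (k r / r) * σ (ball x r) * (∫⁻ y in ball x r, kbar n σ k r y ∂μ) ^ δ
  set I : ℤ → Set ℝ := fun j => Ioc (4 * n * (2:ℝ) ^ (-j) / 2) (4 * n * (2:ℝ) ^ (-j))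
  calc _ ≤ ∑' j, B * ∫⁻ r in I j, F r := ENNReal.tsum_le_tsum fun j => by
        rw [ch, indicator_of_mem (mem_cubeAt j x), Pi.one_apply, mul_one]
        exact dyadic_term_le_two_mul_setLIntegral hn hD hD0 hk0 hmono hδ.le μ (mem_cubeAt j x)
    _ = B * ∑' j, ∫⁻ r in I j, F r := ENNReal.tsum_mul_left
    _ ≤ B * ∫⁻ r in Ioi 0, F r := by
        gcongr B * ?_
        exact tsum_setLIntegral_le_of_subset (fun _ => measurableSet_Ioc)
          (pairwise_disjoint_Ioc_half_mul_two_zpow _) fun j r hr =>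
            (by positivity : (0:ℝ) < 4 * n * 2 ^ (-j) / 2).trans hr.1

/-- Let `k : (0,∞) → [0,∞)` be nonincreasing and lower semicontinuous,
`1 < p < ∞`, `σ` a locally finite doubling measure on `ℝ^n`, and `K(Q) = k(r_Q)`. Then
there are `c, C > 0` such that for every locally finite positive Borel measure `μ` and
every `x`,
`∑_Q k(c r_Q) σ(Q) χ_Q(x) (∫_Q K̄(Q)(y) dμ(y))^{p'-1} ≤ C 𝒲_{k,σ}[μ](x)`. -/
theorem stmt16 (n : ℕ) (hn : 0 < n) (k : ℝ → ℝ)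
    (hk0 : ∀ r ∈ Ioi (0:ℝ), 0 ≤ k r) (hmono : AntitoneOn k (Ioi (0:ℝ)))
    (hlsc : LowerSemicontinuousOn k (Ioi (0:ℝ)))
    (p : ℝ) (hp : 1 < p)
    (σ : Measure (Euc n)) [IsLocallyFiniteMeasure σ] (hσ : Doubling n σ) :
    ∃ c C : ℝ, 0 < c ∧ 0 < C ∧
      ∀ (μ : Measure (Euc n)), IsLocallyFiniteMeasure μ → ∀ x : Euc n,
        (∑' Q : DIdx n, ENNReal.ofReal (k (c * sideLen n Q)) * σ (dCube n Q) * ch n Q x *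
            (∫⁻ y in dCube n Q,
                Kbar n σ (fun q => ENNReal.ofReal (k (sideLen n q))) Q y ∂μ) ^
              (p / (p - 1) - 1)) ≤
          ENNReal.ofReal C * WolffC n σ k p μ x :=
  stmt16_general n hn k hk0 hmono p hp σ hσ
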